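/- Let T be a triangulation of a convex polygon and let e_1, e_2 be two independent diagonals of T. Then e_2 is still a diagonal of the triangulation obtained by flipping e_1 in T, and flipping e_1 and then e_2 yields the same triangulation as flipping e_2 and then e_1. -/

import Mathlib

open Finset

/-- Two vertices of the convex `m`-gon are adjacent in the cyclic order. -/
def PolyAdj (m : ℕ) (a b : Fin m) : Prop :=
  (a.val + 1) % m = b.val ∨ (b.val + 1) % m = a.val

/-- `e` is a diagonal of the convex `m`-gon: an unordered pair of distinct,
non-adjacent vertices. -/
def IsDiagonal (m : ℕ) (e : Finset (Fin m)) : Prop :=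
  ∃ a b : Fin m, a ≠ b ∧ ¬ PolyAdj m a b ∧ e = {a, b}

/-- The cyclic distance from `a` to `x`, going forwards in the cyclic order. -/
def cycDist (m : ℕ) (a x : Fin m) : ℕ := (x.val + m - a.val) % m

/-- `x` lies strictly between `a` and `b` in the cyclic order. -/
def CycBtw (m : ℕ) (a x b : Fin m) : Prop :=
  0 < cycDist m a x ∧ cycDist m a x < cycDist m a b

/-- Two chords cross: their endpoints strictly interleave in the cyclic order. -/
def Cross (m : ℕ) (e₁ e₂ : Finset (Fin m)) : Prop :=
  ∃ a b c d : Fin m, e₁ = {a, b} ∧ e₂ = {c, d} ∧ CycBtw m a c b ∧ CycBtw m b d a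

/-- A triangulation of the convex `m`-gon: a maximal set of pairwise
non-crossing diagonals. -/
structure Triangulation (m : ℕ) where
  diagonals : Finset (Finset (Fin m))
  isDiagonal : ∀ e ∈ diagonals, IsDiagonal m e
  noncross : ∀ e₁ ∈ diagonals, ∀ e₂ ∈ diagonals, ¬ Cross m e₁ e₂
  maximal : ∀ e, IsDiagonal m e → (∀ e' ∈ diagonals, ¬ Cross m e e') → e ∈ diagonals

/-- `e` is a side in the triangulation `T`: either an edge of the polygon
(between cyclically adjacent vertices) or a diagonal of `T`. -/
def IsSide (m : ℕ) (T : Triangulation m) (e : Finset (Fin m)) : Prop :=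
  (∃ a b : Fin m, PolyAdj m a b ∧ e = {a, b}) ∨ e ∈ T.diagonals

/-- `t` is a triangle of the triangulation `T`: three distinct vertices each
pair of which forms a side of `T`. -/
def IsTriangle (m : ℕ) (T : Triangulation m) (t : Finset (Fin m)) : Prop :=
  ∃ a b c : Fin m, a ≠ b ∧ a ≠ c ∧ b ≠ c ∧ t = {a, b, c} ∧
    IsSide m T {a, b} ∧ IsSide m T {a, c} ∧ IsSide m T {b, c}

/-- Two diagonals of `T` are neighbors if they both belong to `T` and lie on a
common triangle of `T`; they are independent otherwise. -/
def Neighbor (m : ℕ) (T : Triangulation m) (e₁ e₂ : Finset (Fin m)) : Prop :=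
  e₁ ∈ T.diagonals ∧ e₂ ∈ T.diagonals ∧
    ∃ t, IsTriangle m T t ∧ e₁ ⊆ t ∧ e₂ ⊆ t

/-- `T'` is obtained from `T` by flipping the diagonal `e`, which removes `e`
and creates the new diagonal `e'` (necessarily the opposite diagonal of the
quadrilateral formed by the two triangles of `T` containing `e`, since `T'` is
again a triangulation). -/
def IsFlip (m : ℕ) (T T' : Triangulation m) (e e' : Finset (Fin m)) : Prop :=
  e ∈ T.diagonals ∧ e' ∉ T.diagonals ∧
    T'.diagonals = insert e' (T.diagonals.erase e)

/-- `Ts 0, Ts 1, …, Ts r` is a sequence of triangulations in which `Ts (i+1)`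
is obtained from `Ts i` by performing the flip `F i`, which removes the
diagonal `(F i).1` and creates the diagonal `(F i).2`. -/
def IsFlipSeq (m r : ℕ) (F : ℕ → Finset (Fin m) × Finset (Fin m))
    (Ts : ℕ → Triangulation m) : Prop :=
  ∀ i < r, IsFlip m (Ts i) (Ts (i + 1)) (F i).1 (F i).2

/-- The flip distance between two triangulations: the minimum length of a flip
sequence transforming one into the other. -/
noncomputable def FlipDist (m : ℕ) (T T' : Triangulation m) : ℕ :=
  sInf {r | ∃ F Ts, IsFlipSeq m r F Ts ∧ Ts 0 = T ∧ Ts r = T'}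

/-- `e` is a free-diagonal of `T` with respect to `Tfinal`: flipping `e` in `T`
creates a diagonal belonging to `Tfinal`. -/
def FreeDiagonal (m : ℕ) (T Tfinal : Triangulation m) (e : Finset (Fin m)) : Prop :=
  ∃ T' e', IsFlip m T T' e e' ∧ e' ∈ Tfinal.diagonals

/-- Arc of the DAG `D_F` associated to the flip sequence `F` with triangulation
sequence `Ts`: there is an arc from flip `i` to flip `j` when `i < j` and the
diagonal created by flip `i` is a neighbor of the diagonal removed by flip `j`
in the triangulation `Ts j` in which flip `j` is performed. -/
def Arc (m r : ℕ) (F : ℕ → Finset (Fin m) × Finset (Fin m))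
    (Ts : ℕ → Triangulation m) (i j : ℕ) : Prop :=
  i < j ∧ j < r ∧ Neighbor m (Ts j) (F i).2 (F j).1

/-!
Let `a` and `b` be the apexes of the two triangles of `T` on a diagonal `e = pq`, one on each side
of `e`. A flip of `e` creates a diagonal that crosses `e` and no other diagonal of `T`. Its
endpoint on the side of `a` lies neither strictly between `p` and `a` nor strictly between `a` and
`q`, since the new diagonal would then cross the side `pa` or `aq`; hence the flip creates `ab`.
If `g` is independent of `e`, none of `pa, aq, qb, bp` is `g`, so these sides survive the flip of
`g`, and flipping `e` afterwards still creates `ab`. So both orders of flipping `e₁, e₂` remove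
them and insert the same two diagonals.
-/

theorem Finset.pair_eq_pair_iff {α : Type*} [DecidableEq α] {x y z w : α} :
    ({x, y} : Finset α) = {z, w} ↔ x = z ∧ y = w ∨ x = w ∧ y = z := by
  rw [← Finset.coe_inj, Finset.coe_pair, Finset.coe_pair, Set.pair_eq_pair_iff]

theorem Finset.insert_erase_insert_erase_comm {α : Type*} [DecidableEq α] (s : Finset α)
    {x y x' y' : α} (hx' : x' ≠ y) (hy' : y' ≠ x) :
    insert y' ((insert x' (s.erase x)).erase y) = insert x' ((insert y' (s.erase y)).erase x) := by
  rw [erase_insert_of_ne hx', erase_insert_of_ne hy', insert_comm, erase_right_comm]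

section Polygon

variable {m : ℕ}

theorem val_add_one_mod_cases (a : Fin m) :
    a.val + 1 < m ∧ (a.val + 1) % m = a.val + 1 ∨ a.val + 1 = m ∧ (a.val + 1) % m = 0 := by
  rcases (show a.val + 1 ≤ m from a.isLt).lt_or_eq with h | h
  · exact Or.inl ⟨h, Nat.mod_eq_of_lt h⟩
  · exact Or.inr ⟨h, by rw [h, Nat.mod_self]⟩

theorem cycDist_cases (a x : Fin m) :
    a ≤ x ∧ cycDist m a x = x.val - a.val ∨ x < a ∧ cycDist m a x = x.val + m - a.val := by
  unfold cycDist
  rcases le_or_gt a x with h | h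
  · refine Or.inl ⟨h, ?_⟩
    rw [show x.val + m - a.val = x.val - a.val + m by omega, Nat.add_mod_right]
    exact Nat.mod_eq_of_lt (by omega)
  · exact Or.inr ⟨h, Nat.mod_eq_of_lt (by omega)⟩

theorem cycBtw_iff_sbtw {a x b : Fin m} : CycBtw m a x b ↔ sbtw a x b := by
  have := cycDist_cases a x
  have := cycDist_cases a b
  rw [CycBtw, Fin.sbtw_iff]
  omega

theorem isDiagonal_pair_iff {p q : Fin m} :
    IsDiagonal m {p, q} ↔ p ≠ q ∧ ¬ PolyAdj m p q := by
  refine ⟨?_, fun ⟨hpq, hadj⟩ => ⟨p, q, hpq, hadj, rfl⟩⟩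
  rintro ⟨a, b, hab, hadj, heq⟩
  rcases Finset.pair_eq_pair_iff.1 heq with ⟨rfl, rfl⟩ | ⟨rfl, rfl⟩
  · exact ⟨hab, hadj⟩
  · exact ⟨hab.symm, fun h => hadj h.symm⟩

theorem exists_polyAdj_sbtw {p q : Fin m} (hpq : p ≠ q) (hadj : ¬ PolyAdj m p q) :
    ∃ a, PolyAdj m p a ∧ sbtw p a q := by
  refine ⟨⟨(p.val + 1) % m, Nat.mod_lt _ p.pos⟩, Or.inl rfl, ?_⟩
  have := val_add_one_mod_cases p
  have := val_add_one_mod_cases q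
  rw [PolyAdj] at hadj
  simp only [Fin.sbtw_iff, Fin.lt_def]
  omega

theorem cross_pair_of_sbtw {a b c d : Fin m} (hc : sbtw a c b) (hd : sbtw b d a) :
    Cross m {a, b} {c, d} :=
  ⟨a, b, c, d, rfl, rfl, cycBtw_iff_sbtw.2 hc, cycBtw_iff_sbtw.2 hd⟩

theorem Cross.exists_sbtw {a b : Fin m} {f : Finset (Fin m)} (h : Cross m {a, b} f) :
    ∃ c d, f = {c, d} ∧ sbtw a c b ∧ sbtw b d a := by
  obtain ⟨a', b', c, d, hab, rfl, hc, hd⟩ := h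
  rw [cycBtw_iff_sbtw] at hc hd
  rcases Finset.pair_eq_pair_iff.1 hab with ⟨rfl, rfl⟩ | ⟨rfl, rfl⟩
  · exact ⟨c, d, rfl, hc, hd⟩
  · exact ⟨d, c, Finset.pair_comm c d, hd, hc⟩

theorem Cross.symm {e f : Finset (Fin m)} (h : Cross m e f) : Cross m f e := by
  obtain ⟨a, b, c, d, rfl, rfl, hc, hd⟩ := h
  rw [cycBtw_iff_sbtw] at hc hd
  rw [Finset.pair_comm a b]
  refine cross_pair_of_sbtw ?_ ?_ <;> simp only [Fin.sbtw_iff] at * <;> omega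

theorem not_cross_of_polyAdj {u v : Fin m} (hadj : PolyAdj m u v) (f : Finset (Fin m)) :
    ¬ Cross m {u, v} f := by
  intro h
  obtain ⟨x, y, -, hx, hy⟩ := h.exists_sbtw
  have := val_add_one_mod_cases u
  have := val_add_one_mod_cases v
  rw [PolyAdj] at hadj
  rw [Fin.sbtw_iff] at hx hy
  omega

theorem eq_of_not_cross_pair {p q a x y : Fin m} (hy : sbtw p y q) (hx : sbtw q x p)
    (ha : sbtw p a q) (hpa : ¬ Cross m {p, a} {y, x}) (haq : ¬ Cross m {a, q} {y, x}) :
    y = a := by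
  by_contra hya
  have : sbtw p y a ∧ sbtw a x p ∨ sbtw a y q ∧ sbtw q x a := by
    simp only [Fin.sbtw_iff] at *
    omega
  rcases this with ⟨h₁, h₂⟩ | ⟨h₁, h₂⟩
  · exact hpa (cross_pair_of_sbtw h₁ h₂)
  · exact haq (cross_pair_of_sbtw h₁ h₂)

end Polygon

section Triangulation

variable {m : ℕ} {T T' : Triangulation m}

theorem Triangulation.ext_diagonals (h : T.diagonals = T'.diagonals) : T = T' := by
  cases T
  cases T'
  cases h
  rfl

theorem IsSide.not_cross {s f : Finset (Fin m)} (hs : IsSide m T s) (hf : f ∈ T.diagonals) :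
    ¬ Cross m s f := by
  rcases hs with ⟨u, v, hadj, rfl⟩ | hs
  · exact not_cross_of_polyAdj hadj f
  · exact T.noncross s hs f hf

theorem Neighbor.symm {e f : Finset (Fin m)} (h : Neighbor m T e f) : Neighbor m T f e :=
  let ⟨he, hf, t, ht, het, hft⟩ := h
  ⟨hf, he, t, ht, hft, het⟩

/-- `a` is the third vertex of a triangle of `T` on `pq`, on the side of the arc from `p` to `q`. -/
def IsApex (m : ℕ) (T : Triangulation m) (p q a : Fin m) : Prop :=
  sbtw p a q ∧ IsSide m T {p, a} ∧ IsSide m T {a, q}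

theorem IsApex.sides_ne {p q a : Fin m} (ha : IsApex m T p q a) :
    ({p, a} : Finset (Fin m)) ≠ {p, q} ∧ ({a, q} : Finset (Fin m)) ≠ {p, q} := by
  have : a ≠ p ∧ a ≠ q := by
    have := ha.1
    rw [Fin.sbtw_iff] at this
    omega
  exact ⟨ne_of_mem_of_not_mem' (a := a) (by simp) (by simp [this]),
    ne_of_mem_of_not_mem' (a := a) (by simp) (by simp [this])⟩

theorem IsApex.isTriangle {p q a : Fin m} (ha : IsApex m T p q a) (he : {p, q} ∈ T.diagonals) :
    IsTriangle m T {p, a, q} := by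
  obtain ⟨hpaq, hpa, haq⟩ := ha
  have : p ≠ a ∧ p ≠ q ∧ a ≠ q := by
    rw [Fin.sbtw_iff] at hpaq
    omega
  exact ⟨p, a, q, this.1, this.2.1, this.2.2, rfl, hpa, Or.inr he, haq⟩

/-- The apex is the farthest vertex `a` from `p` on the arc towards `q` such that `pa` is a side:
were `aq` not a side, a diagonal crossing it would have to cross `pq`, or `pa`, or be a side `pu`
with `u` farther than `a`. -/
theorem exists_isApex {p q : Fin m} (he : {p, q} ∈ T.diagonals) : ∃ a, IsApex m T p q a := by
  classical
  obtain ⟨hpq, hadj⟩ := isDiagonal_pair_iff.1 (T.isDiagonal _ he)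
  obtain ⟨a₀, ha₀, hpa₀⟩ := exists_polyAdj_sbtw hpq hadj
  let S := univ.filter fun x => sbtw p x q ∧ IsSide m T {p, x}
  have hS : S.Nonempty := ⟨a₀, by simpa [S] using ⟨hpa₀, Or.inl ⟨p, a₀, ha₀, rfl⟩⟩⟩
  obtain ⟨a, haS, hmax⟩ := S.exists_max_image (cycDist m p) hS
  simp only [S, mem_filter, mem_univ, true_and] at haS hmax
  obtain ⟨hpaq, hpa⟩ := haS
  have hfar : ∀ x, sbtw p x q → IsSide m T {p, x} → ¬ sbtw p a x := fun x hx hpx hax =>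
    (cycBtw_iff_sbtw.2 hax).2.not_ge (hmax x ⟨hx, hpx⟩)
  refine ⟨a, hpaq, hpa, ?_⟩
  by_contra haq
  have haq_diag : IsDiagonal m {a, q} := isDiagonal_pair_iff.2
    ⟨by rw [Fin.sbtw_iff] at hpaq; omega, fun h => haq (Or.inl ⟨a, q, h, rfl⟩)⟩
  obtain ⟨g, hg, hcross⟩ : ∃ g ∈ T.diagonals, Cross m {a, q} g := by
    by_contra! h
    exact haq (Or.inr (T.maximal _ haq_diag h))
  obtain ⟨u, v, rfl, hu, hv⟩ := hcross.exists_sbtw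
  have hpuq : sbtw p u q ∧ sbtw p a u ∧ sbtw a u p := by
    simp only [Fin.sbtw_iff] at *
    omega
  have : sbtw q v p ∨ v = p ∨ sbtw p v a := by
    simp only [Fin.sbtw_iff] at *
    omega
  rcases this with hv' | rfl | hv'
  · exact T.noncross _ he _ hg (cross_pair_of_sbtw hpuq.1 hv')
  · exact hfar u hpuq.1 (Or.inr (Finset.pair_comm u v ▸ hg)) hpuq.2.1
  · exact hpa.not_cross hg (Finset.pair_comm v u ▸ cross_pair_of_sbtw hv' hpuq.2.2)

theorem IsFlip.mem_of_ne {e e' g : Finset (Fin m)} (hf : IsFlip m T T' e e')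
    (hg : g ∈ T.diagonals) (hge : g ≠ e) : g ∈ T'.diagonals := by
  rw [hf.2.2]
  exact mem_insert_of_mem (mem_erase.2 ⟨hge, hg⟩)

theorem IsFlip.mem_new {e e' : Finset (Fin m)} (hf : IsFlip m T T' e e') : e' ∈ T'.diagonals := by
  rw [hf.2.2]
  exact mem_insert_self _ _

theorem IsFlip.isSide {e e' s : Finset (Fin m)} (hf : IsFlip m T T' e e') (hs : IsSide m T s)
    (hse : s ≠ e) : IsSide m T' s :=
  hs.imp id fun hs => hf.mem_of_ne hs hse

theorem IsFlip.cross {e e' : Finset (Fin m)} (hf : IsFlip m T T' e e') : Cross m e' e := by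
  by_contra h
  refine hf.2.1 (T.maximal e' (T'.isDiagonal e' hf.mem_new) fun g hg => ?_)
  by_cases hge : g = e
  · exact hge ▸ h
  · exact T'.noncross e' hf.mem_new g (hf.mem_of_ne hg hge)

theorem IsFlip.eq_pair_of_isApex {p q a b : Fin m} {e' : Finset (Fin m)}
    (hf : IsFlip m T T' {p, q} e') (ha : IsApex m T p q a) (hb : IsApex m T q p b) :
    e' = {a, b} := by
  obtain ⟨y, x, rfl, hy, hx⟩ := hf.cross.symm.exists_sbtw
  have hside : ∀ s, IsSide m T s → s ≠ {p, q} → ¬ Cross m s {y, x} := fun s hs hse =>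
    (hf.isSide hs hse).not_cross hf.mem_new
  have hside_b : ∀ s, IsSide m T s → s ≠ {q, p} → ¬ Cross m s {x, y} := by
    rw [Finset.pair_comm q p, Finset.pair_comm x y]
    exact hside
  have hya : y = a := eq_of_not_cross_pair hy hx ha.1
    (hside _ ha.2.1 ha.sides_ne.1) (hside _ ha.2.2 ha.sides_ne.2)
  have hxb : x = b := eq_of_not_cross_pair hx hy hb.1
    (hside_b _ hb.2.1 hb.sides_ne.1) (hside_b _ hb.2.2 hb.sides_ne.2)
  rw [hya, hxb]

theorem IsApex.of_flip_of_not_neighbor {p q a : Fin m} {e e' : Finset (Fin m)}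
    (hf : IsFlip m T T' e e') (ha : IsApex m T p q a) (hmem : {p, q} ∈ T.diagonals)
    (hind : ¬ Neighbor m T e {p, q}) : IsApex m T' p q a := by
  have hsub : ∀ s ⊆ ({p, a, q} : Finset (Fin m)), s ≠ e := fun s hs hse =>
    hind ⟨hf.1, hmem, _, ha.isTriangle hmem, hse ▸ hs, by simp [insert_subset_iff]⟩
  exact ⟨ha.1, hf.isSide ha.2.1 (hsub _ (by simp [insert_subset_iff])),
    hf.isSide ha.2.2 (hsub _ (by simp))⟩

theorem IsFlip.new_eq_of_not_neighbor {e e' g g' g'' : Finset (Fin m)} {T₂ T₃ : Triangulation m}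
    (hf : IsFlip m T T' e e') (hind : ¬ Neighbor m T e g)
    (hg : IsFlip m T T₂ g g') (hg' : IsFlip m T' T₃ g g'') : g'' = g' := by
  obtain ⟨p, q, -, -, rfl⟩ := T.isDiagonal g hg.1
  have hqp : {q, p} ∈ T.diagonals := Finset.pair_comm p q ▸ hg.1
  obtain ⟨a, ha⟩ := exists_isApex hg.1
  obtain ⟨b, hb⟩ := exists_isApex hqp
  have ha' := ha.of_flip_of_not_neighbor hf hg.1 hind
  have hb' := hb.of_flip_of_not_neighbor hf hqp (Finset.pair_comm p q ▸ hind)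
  rw [hg.eq_pair_of_isApex ha hb, hg'.eq_pair_of_isApex ha' hb']

end Triangulation

theorem independent_flips_commute_general (m : ℕ)
    (T : Triangulation m) (e₁ e₂ : Finset (Fin m))
    (h₁ : e₁ ∈ T.diagonals) (h₂ : e₂ ∈ T.diagonals) (hne : e₁ ≠ e₂)
    (hind : ¬ Neighbor m T e₁ e₂)
    (T₁ : Triangulation m) (e₁' : Finset (Fin m)) (hf₁ : IsFlip m T T₁ e₁ e₁') :
    e₂ ∈ T₁.diagonals ∧
      ∀ (T₂ T₁₂ T₂₁ : Triangulation m) (e₂' e₂'' e₁'' : Finset (Fin m)),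
        IsFlip m T T₂ e₂ e₂' → IsFlip m T₁ T₁₂ e₂ e₂'' →
        IsFlip m T₂ T₂₁ e₁ e₁'' → T₁₂ = T₂₁ := by
  refine ⟨hf₁.mem_of_ne h₂ hne.symm, fun T₂ T₁₂ T₂₁ e₂' e₂'' e₁'' hf₂ hf₁₂ hf₂₁ => ?_⟩
  have he₂'' : e₂'' = e₂' := hf₁.new_eq_of_not_neighbor hind hf₂ hf₁₂
  have he₁'' : e₁'' = e₁' := hf₂.new_eq_of_not_neighbor (fun h => hind h.symm) hf₁ hf₂₁
  apply Triangulation.ext_diagonals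
  rw [hf₁₂.2.2, hf₂₁.2.2, hf₁.2.2, hf₂.2.2, he₂'', he₁'']
  exact Finset.insert_erase_insert_erase_comm _ (ne_of_mem_of_not_mem h₂ hf₁.2.1).symm
    (ne_of_mem_of_not_mem h₁ hf₂.2.1).symm

/-- Let `T` be a triangulation of a convex polygon and let `e₁, e₂` be two
independent diagonals of `T`. Then `e₂` is still a diagonal of the
triangulation `T₁` obtained by flipping `e₁` in `T`, and flipping `e₁` and
then `e₂` yields the same triangulation as flipping `e₂` and then `e₁`. -/
theorem independent_flips_commute (m : ℕ) (hm : 3 ≤ m)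
    (T : Triangulation m) (e₁ e₂ : Finset (Fin m))
    (h₁ : e₁ ∈ T.diagonals) (h₂ : e₂ ∈ T.diagonals) (hne : e₁ ≠ e₂)
    (hind : ¬ Neighbor m T e₁ e₂)
    (T₁ : Triangulation m) (e₁' : Finset (Fin m)) (hf₁ : IsFlip m T T₁ e₁ e₁') :
    e₂ ∈ T₁.diagonals ∧
      ∀ (T₂ T₁₂ T₂₁ : Triangulation m) (e₂' e₂'' e₁'' : Finset (Fin m)),
        IsFlip m T T₂ e₂ e₂' → IsFlip m T₁ T₁₂ e₂ e₂'' →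
        IsFlip m T₂ T₂₁ e₁ e₁'' → T₁₂ = T₂₁ :=
  independent_flips_commute_general m T e₁ e₂ h₁ h₂ hne hind T₁ e₁' hf₁
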